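/- For every integer k ≥ 1, the alternating zeta value ζ̂(k) = ∑_{j=1}^{∞} (−1)^{j−1}/j^k satisfies ζ̂(k) = ∫_0^{1/2} f_{k−1}(x) dx = (1/4) · f_k(1/2). -/

import Mathlib

/-!
Write `b m = H_{m+1}^{(k-1)} / (m+1)`. Induction on `k` shows that `b` is the binomial transform
`b m = ∑ₙ C(m,n) aₙ` of `aₙ = (-1)ⁿ / (n+1)^k`. For `0 ≤ y < 1/2` the double series
`∑_{m,n} C(m,n) aₙ yᵐ` converges absolutely, which gives Euler's transformation
`(1 - y) ∑ₘ bₘ yᵐ = ∑ₙ aₙ (y / (1 - y))ⁿ`; letting `y → 1/2⁻`, Abel's theorem on the right-hand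
side gives `ζ̂(k) = ∑ₘ bₘ / 2^{m+1}`. Integrating termwise, `∫₀^{1/2} f_{k-1}` is the same series,
and since `H_{j+1}^{(k)} = ∑_{m ≤ j} bₘ`, the Cauchy product with the geometric series gives
`f_k(1/2) = 4 ∑ₘ bₘ / 2^{m+1}`.
-/

open Filter

/-- The generalized harmonic numbers: `genH k n = H_n^{(k)}`, defined by `H_n^{(0)} = 1`
and `H_n^{(k)} = ∑_{j=1}^{n} H_j^{(k−1)}/j` for `k ≥ 1`. -/
noncomputable def genH : ℕ → ℕ → ℝ
  | 0, _ => 1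
  | (k+1), n => ∑ j ∈ Finset.Icc 1 n, genH k j / (j : ℝ)

open Finset Topology

/-- Unsigned convention: the alternating signs of Euler's transformation are carried by `a`. -/
noncomputable def binomialTransform (a : ℕ → ℝ) (m : ℕ) : ℝ :=
  ∑ n ∈ range (m + 1), (m.choose n : ℝ) * a n

lemma binomialTransform_neg_one_pow (m : ℕ) :
    binomialTransform (fun n => (-1) ^ n) m = if m = 0 then 1 else 0 := by
  have := congrArg (Int.cast : ℤ → ℝ) (Int.alternating_sum_range_choose (n := m))
  push_cast at this
  simpa only [binomialTransform, mul_comm] using this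

lemma sum_range_binomialTransform (a : ℕ → ℝ) (m : ℕ) :
    ∑ i ∈ range (m + 1), binomialTransform a i =
      ∑ n ∈ range (m + 1), ((m + 1).choose (n + 1) : ℝ) * a n := by
  simp only [binomialTransform, range_eq_Ico]
  rw [← sum_Ico_Ico_comm 0 (m + 1) (fun n i => (i.choose n : ℝ) * a n)]
  refine sum_congr rfl fun n _ => ?_
  rw [← sum_mul, Ico_add_one_right_eq_Icc, ← Nat.cast_sum, Nat.sum_Icc_choose]

lemma binomialTransform_div_succ (a : ℕ → ℝ) (m : ℕ) :
    binomialTransform (fun n => a n / (n + 1)) m =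
      (∑ i ∈ range (m + 1), binomialTransform a i) / (m + 1) := by
  rw [sum_range_binomialTransform, sum_div, binomialTransform]
  refine sum_congr rfl fun n _ => ?_
  have h : ((m : ℝ) + 1) * m.choose n = (m + 1).choose (n + 1) * ((n : ℝ) + 1) := by
    exact_mod_cast Nat.add_one_mul_choose_eq m n
  field_simp
  linear_combination a n * h

lemma genH_succ_succ (k m : ℕ) :
    genH (k + 1) (m + 1) = ∑ i ∈ range (m + 1), genH k (i + 1) / (i + 1) := by
  rw [genH, ← Ico_add_one_right_eq_Icc, sum_Ico_eq_sum_range]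
  simp only [add_tsub_cancel_right, Nat.cast_add, Nat.cast_one, add_comm 1]

lemma genH_nonneg (k n : ℕ) : 0 ≤ genH k n := by
  induction k generalizing n with
  | zero => exact zero_le_one
  | succ k ih => exact sum_nonneg fun j _ => div_nonneg (ih j) j.cast_nonneg

lemma genH_succ_le (k n : ℕ) : genH k (n + 1) ≤ n + 1 := by
  induction k generalizing n with
  | zero => simp [genH]
  | succ k ih =>
    rw [genH_succ_succ]
    calc ∑ i ∈ range (n + 1), genH k (i + 1) / (i + 1)
        ≤ ∑ _i ∈ range (n + 1), (1 : ℝ) :=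
          sum_le_sum fun i _ => (div_le_one (by positivity)).mpr (ih i)
      _ = n + 1 := by simp

lemma genH_succ_eq_sum_binomialTransform (k m : ℕ) :
    genH k (m + 1) =
      ∑ i ∈ range (m + 1), binomialTransform (fun n => (-1) ^ n / ((n : ℝ) + 1) ^ k) i := by
  induction k generalizing m with
  | zero => simp [genH, binomialTransform_neg_one_pow]
  | succ k ih =>
    rw [genH_succ_succ]
    refine sum_congr rfl fun i _ => ?_
    rw [ih, ← binomialTransform_div_succ]
    simp only [pow_succ, div_div]

lemma genH_succ_div_eq_binomialTransform (k m : ℕ) :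
    genH k (m + 1) / (m + 1) =
      binomialTransform (fun n => (-1) ^ n / ((n : ℝ) + 1) ^ (k + 1)) m := by
  rw [genH_succ_eq_sum_binomialTransform, ← binomialTransform_div_succ]
  simp only [pow_succ, div_div]

lemma abs_genH_succ_div_le_one (k m : ℕ) : |genH k (m + 1) / (m + 1)| ≤ 1 := by
  rw [abs_of_nonneg (div_nonneg (genH_nonneg k _) (by positivity))]
  exact (div_le_one (by positivity)).mpr (genH_succ_le k m)

lemma summable_abs_genH_succ_mul_pow (k : ℕ) {y : ℝ} (hy0 : 0 ≤ y) (hy1 : y < 1) :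
    Summable fun n => |genH k (n + 1)| * y ^ n := by
  have hy : ‖y‖ < 1 := by rwa [Real.norm_eq_abs, abs_of_nonneg hy0]
  refine .of_nonneg_of_le (fun n => by positivity) (fun n => ?_)
    (((summable_pow_mul_geometric_of_norm_lt_one 1 hy).add
      (summable_geometric_of_norm_lt_one hy)))
  rw [abs_of_nonneg (genH_nonneg k _), pow_one, ← add_one_mul]
  exact mul_le_mul_of_nonneg_right (genH_succ_le k n) (pow_nonneg hy0 n)

lemma exists_tendsto_sum_neg_one_pow_div_pow {s : ℕ} (hs : s ≠ 0) :
    ∃ L, Tendsto (fun N => ∑ j ∈ range N, (-1 : ℝ) ^ j / ((j : ℝ) + 1) ^ s) atTop (𝓝 L) := by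
  have hanti : Antitone fun j : ℕ => (1 / ((j : ℝ) + 1)) ^ s := fun i j hij => by
    dsimp only
    gcongr
  have hzero : Tendsto (fun j : ℕ => (1 / ((j : ℝ) + 1)) ^ s) atTop (𝓝 0) := by
    simpa only [zero_pow hs] using (tendsto_one_div_add_atTop_nhds_zero_nat (𝕜 := ℝ)).pow s
  simpa only [div_pow, one_pow, mul_one_div] using
    hanti.tendsto_alternating_series_of_tendsto_zero hzero

lemma hasSum_choose_mul_pow (n : ℕ) {y : ℝ} (hy : |y| < 1) :
    HasSum (fun m => (m.choose n : ℝ) * y ^ m) (y ^ n / (1 - y) ^ (n + 1)) := by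
  have h := (hasSum_choose_mul_geometric_of_norm_lt_one (𝕜 := ℝ) n
    (by rwa [Real.norm_eq_abs])).mul_left (y ^ n)
  have hlow : ∑ m ∈ range n, (m.choose n : ℝ) * y ^ m = 0 :=
    sum_eq_zero fun m hm => by rw [Nat.choose_eq_zero_of_lt (mem_range.mp hm)]; simp
  rw [← hasSum_nat_add_iff' n, hlow, sub_zero, div_eq_mul_one_div]
  exact h.congr_fun fun i => by ring

lemma hasSum_binomialTransform_mul_pow {a : ℕ → ℝ} {y : ℝ} (hy0 : 0 ≤ y) (hy1 : y < 1)
    (ha : Summable fun n => |a n| * (y / (1 - y)) ^ n) :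
    HasSum (fun m => binomialTransform a m * y ^ m)
      ((∑' n, a n * (y / (1 - y)) ^ n) / (1 - y)) := by
  have hrow : ∀ (b : ℕ → ℝ) n, HasSum (fun m => b n * ((m.choose n : ℝ) * y ^ m))
      (b n * (y / (1 - y)) ^ n / (1 - y)) := fun b n => by
    have e : b n * (y ^ n / (1 - y) ^ (n + 1)) = b n * (y / (1 - y)) ^ n / (1 - y) := by
      have : 1 - y ≠ 0 := by linarith
      rw [div_pow, pow_succ]
      field_simp
    exact e ▸ (hasSum_choose_mul_pow n (by rwa [abs_of_nonneg hy0])).mul_left (b n)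
  set g : ℕ × ℕ → ℝ := fun p => a p.1 * ((p.2.choose p.1 : ℝ) * y ^ p.2)
  have hg_abs : ∀ p, |g p| = |a p.1| * ((p.2.choose p.1 : ℝ) * y ^ p.2) := fun p => by
    rw [abs_mul, abs_of_nonneg (mul_nonneg (Nat.cast_nonneg _) (pow_nonneg hy0 _))]
  have hg : Summable g := by
    refine .of_abs ((summable_prod_of_nonneg fun _ => abs_nonneg _).mpr ⟨fun n => ?_, ?_⟩)
    · simpa only [hg_abs] using (hrow (|a ·|) n).summable
    · simpa only [hg_abs, (hrow (|a ·|) _).tsum_eq] using ha.div_const (1 - y)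
  have hrows := hg.hasSum.prod_fiberwise (hrow a)
  have hcols := ((Equiv.prodComm ℕ ℕ).hasSum_iff.mpr hg.hasSum).prod_fiberwise fun m =>
    hasSum_sum_of_ne_finset_zero (s := range (m + 1)) fun n hn => by
      simp [g, Nat.choose_eq_zero_of_lt (by simpa using hn : m < n)]
  rw [← tsum_div_const, hrows.tsum_eq]
  convert hcols using 2 with m
  simp only [g, binomialTransform, sum_mul, Function.comp_apply, Equiv.prodComm_apply,
    Prod.fst_swap, Prod.snd_swap]
  exact sum_congr rfl fun n _ => by ring

lemma continuousAt_tsum_mul_pow {c : ℕ → ℝ} {C x₀ : ℝ} (hc : ∀ m, |c m| ≤ C) (hx₀ : |x₀| < 1) :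
    ContinuousAt (fun y => ∑' m, c m * y ^ m) x₀ := by
  set r := (|x₀| + 1) / 2 with hr
  have hr0 : 0 ≤ r := by positivity
  have hr1 : r < 1 := by linarith
  have hx₀r : |x₀| < r := by linarith
  have hcont : ContinuousOn (fun y => ∑' m, c m * y ^ m) (Set.Icc (-r) r) :=
    continuousOn_tsum (fun m => (continuous_const.mul (continuous_pow m)).continuousOn)
      ((summable_geometric_of_lt_one hr0 hr1).mul_left C) fun m y hy => by
        rw [norm_mul, norm_pow, Real.norm_eq_abs, Real.norm_eq_abs]
        exact mul_le_mul (hc m) (pow_le_pow_left₀ (abs_nonneg _) (abs_le.mpr hy) m)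
          (by positivity) ((abs_nonneg _).trans (hc m))
  obtain ⟨hlo, hhi⟩ := abs_lt.mp hx₀r
  exact hcont.continuousAt (Icc_mem_nhds hlo hhi)

lemma tendsto_div_one_sub_nhdsLT_half :
    Tendsto (fun y : ℝ => y / (1 - y)) (𝓝[<] (1 / 2)) (𝓝[<] 1) := by
  refine tendsto_nhdsWithin_of_tendsto_nhds_of_eventually_within _ ?_ ?_
  · have h : Tendsto (fun y : ℝ => y / (1 - y)) (𝓝 (1 / 2)) (𝓝 (1 / 2 / (1 - 1 / 2))) :=
      (continuousAt_id.div (continuousAt_const.sub continuousAt_id) (by norm_num)).tendsto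
    rw [show (1 : ℝ) / 2 / (1 - 1 / 2) = 1 by norm_num] at h
    exact h.mono_left nhdsWithin_le_nhds
  · filter_upwards [self_mem_nhdsWithin] with y hy
    rw [Set.mem_Iio] at hy ⊢
    exact (div_lt_one (by linarith)).mpr (by linarith)

lemma hasSum_binomialTransform_mul_half_pow {a : ℕ → ℝ} {L C C' : ℝ}
    (hL : Tendsto (fun N => ∑ n ∈ range N, a n) atTop (𝓝 L)) (ha : ∀ n, |a n| ≤ C)
    (hb : ∀ m, |binomialTransform a m| ≤ C') :
    HasSum (fun m => binomialTransform a m * (1 / 2) ^ (m + 1)) L := by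
  set G : ℝ → ℝ := fun y => ∑' m, binomialTransform a m * y ^ m
  have hEuler : ∀ y ∈ Set.Ico (0 : ℝ) (1 / 2), G y * (1 - y) = ∑' n, a n * (y / (1 - y)) ^ n := by
    rintro y ⟨hy0, hy1⟩
    have hx0 : 0 ≤ y / (1 - y) := div_nonneg hy0 (by linarith)
    have hx1 : y / (1 - y) < 1 := (div_lt_one (by linarith)).mpr (by linarith)
    have hsum : Summable fun n => |a n| * (y / (1 - y)) ^ n :=
      .of_nonneg_of_le (fun n => mul_nonneg (abs_nonneg _) (pow_nonneg hx0 n))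
        (fun n => mul_le_mul_of_nonneg_right (ha n) (pow_nonneg hx0 n))
        ((summable_geometric_of_lt_one hx0 hx1).mul_left C)
    simp only [G, (hasSum_binomialTransform_mul_pow hy0 (by linarith) hsum).tsum_eq]
    field_simp [show 1 - y ≠ 0 by linarith]
  have hlim_L : Tendsto (fun y => G y * (1 - y)) (𝓝[<] (1 / 2)) (𝓝 L) := by
    refine ((Real.tendsto_tsum_powerSeries_nhdsWithin_lt hL).comp
      tendsto_div_one_sub_nhdsLT_half).congr' ?_
    filter_upwards [Ico_mem_nhdsLT (by norm_num : (0 : ℝ) < 1 / 2)] with y hy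
    exact (hEuler y hy).symm
  have hlim_G : Tendsto (fun y => G y * (1 - y)) (𝓝[<] (1 / 2)) (𝓝 (G (1 / 2) * (1 - 1 / 2))) :=
    ((continuousAt_tsum_mul_pow hb (by norm_num)).tendsto.mul
      ((continuous_const.sub continuous_id).tendsto _)).mono_left nhdsWithin_le_nhds
  have hsum : Summable fun m => binomialTransform a m * (1 / 2) ^ m :=
    .of_norm_bounded ((summable_geometric_of_lt_one (r := 1 / 2) (by norm_num)
      (by norm_num)).mul_left C') fun m => by
        rw [norm_mul, norm_pow, Real.norm_eq_abs, Real.norm_eq_abs,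
          abs_of_pos (by norm_num : (0 : ℝ) < 1 / 2)]
        exact mul_le_mul_of_nonneg_right (hb m) (by positivity)
  rw [tendsto_nhds_unique hlim_L hlim_G, show (1 : ℝ) - 1 / 2 = 1 / 2 by norm_num]
  exact (hsum.hasSum.mul_right (1 / 2)).congr_fun fun m => by ring

lemma hasSum_sum_range_mul_pow {c : ℕ → ℝ} {r : ℝ} (hr : |r| < 1)
    (hc : Summable fun i => |c i * r ^ i|) :
    HasSum (fun j => (∑ i ∈ range (j + 1), c i) * r ^ j) ((∑' i, c i * r ^ i) / (1 - r)) := by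
  have hr' : ‖r‖ < 1 := by rwa [Real.norm_eq_abs]
  have h := hasSum_sum_range_mul_of_summable_norm (f := fun i => c i * r ^ i) hc
    (summable_norm_geometric_of_norm_lt_one hr')
  rw [tsum_geometric_of_norm_lt_one hr', ← div_eq_mul_inv] at h
  refine h.congr_fun fun j => ?_
  rw [sum_mul]
  refine sum_congr rfl fun i hi => ?_
  rw [mul_assoc, ← pow_add, Nat.add_sub_cancel' (Nat.lt_succ_iff.mp (mem_range.mp hi))]

lemma hasSum_integral_tsum_pow_mul {c : ℕ → ℝ} {y : ℝ} (hy : 0 ≤ y)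
    (hc : Summable fun n => |c n| * y ^ n) :
    HasSum (fun n => c n * y ^ (n + 1) / (n + 1)) (∫ x in (0 : ℝ)..y, ∑' n, x ^ n * c n) := by
  have hbound : ∀ n, ∀ x ∈ Set.uIoc 0 y, ‖x ^ n * c n‖ ≤ |c n| * y ^ n := fun n x hx => by
    rw [Set.uIoc_of_le hy] at hx
    rw [norm_mul, norm_pow, Real.norm_eq_abs, Real.norm_eq_abs, abs_of_pos hx.1, mul_comm]
    exact mul_le_mul_of_nonneg_left (pow_le_pow_left₀ hx.1.le hx.2 n) (abs_nonneg _)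
  refine (intervalIntegral.hasSum_integral_of_dominated_convergence
    (F := fun n x => x ^ n * c n) (fun n _ => |c n| * y ^ n)
    (fun n => ((continuous_pow n).mul continuous_const).aestronglyMeasurable)
    (fun n => .of_forall (hbound n)) (.of_forall fun _ _ => hc) intervalIntegrable_const
    (.of_forall fun x hx => (hc.of_norm_bounded fun n => hbound n x hx).hasSum)).congr_fun
    fun n => ?_
  rw [intervalIntegral.integral_mul_const, integral_pow, zero_pow n.succ_ne_zero, sub_zero]
  ring

/-- For every integer `k ≥ 1`, the alternating zeta value
`ζ̂(k) = ∑_{j=1}^{∞} (−1)^{j−1}/j^k` (the limit of partial sums) satisfies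
`ζ̂(k) = ∫_0^{1/2} f_{k−1}(x) dx = (1/4)·f_k(1/2)`, where
`f_n(x) = ∑_{j=0}^{∞} x^j H_{j+1}^{(n)}`. -/
theorem stmt15 (k : ℕ) (hk : 1 ≤ k) :
    Tendsto (fun N => ∑ j ∈ Finset.range N, (-1 : ℝ) ^ j / ((j : ℝ) + 1) ^ k) atTop
      (nhds (∫ x in (0 : ℝ)..(1 / 2), ∑' j : ℕ, x ^ j * genH (k - 1) (j + 1))) ∧
    (∫ x in (0 : ℝ)..(1 / 2), ∑' j : ℕ, x ^ j * genH (k - 1) (j + 1))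
      = (1 / 4) * ∑' j : ℕ, (1 / 2 : ℝ) ^ j * genH k (j + 1) := by
  obtain ⟨K, rfl⟩ : ∃ K, k = K + 1 := ⟨k - 1, by omega⟩
  rw [Nat.add_sub_cancel]
  set B : ℕ → ℝ := fun m => genH K (m + 1) / (m + 1)
  obtain ⟨L, hL⟩ := exists_tendsto_sum_neg_one_pow_div_pow K.succ_ne_zero
  have hB : HasSum (fun m => B m * (1 / 2) ^ (m + 1)) L := by
    simp only [B, genH_succ_div_eq_binomialTransform]
    refine hasSum_binomialTransform_mul_half_pow (C := 1) (C' := 1) hL (fun n => ?_) fun m => ?_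
    · rw [abs_div, abs_pow, abs_neg, abs_one, one_pow, abs_of_pos (by positivity)]
      exact div_le_one_of_le₀ (one_le_pow₀ (by simp)) (by positivity)
    · simpa only [genH_succ_div_eq_binomialTransform] using abs_genH_succ_div_le_one K m
  have hInt : (∫ x in (0 : ℝ)..(1 / 2), ∑' j : ℕ, x ^ j * genH K (j + 1)) = L :=
    (hasSum_integral_tsum_pow_mul (by norm_num)
      (summable_abs_genH_succ_mul_pow K (y := 1 / 2) (by norm_num) (by norm_num))).unique
      (hB.congr_fun fun m => by simp only [B]; ring)
  have hB' : HasSum (fun m => B m * (1 / 2) ^ m) (2 * L) :=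
    (hB.mul_left 2).congr_fun fun m => by ring
  have hf := hasSum_sum_range_mul_pow (r := 1 / 2) (by norm_num) hB'.summable.abs
  rw [hB'.tsum_eq, show 2 * L / (1 - 1 / 2) = 4 * L by ring] at hf
  rw [hInt, (hf.congr_fun fun j => by rw [genH_succ_succ, mul_comm]).tsum_eq]
  exact ⟨hL, by ring⟩
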